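/- arXiv:2001.03790 — 6 statements merged into one kernel-verified Lean document; each statement's English description precedes it below -/
import Mathlib

section
/- For any nonzero multilinear polynomial f in m variables over F_2 of degree r, the Hamming weight of its evaluation vector ev(f) is at least 2^{m-r}. -/
/-- Evaluation of the multilinear polynomial with coefficients `c` at `x ∈ F_2^m`. -/
def evalPoly (m : ℕ) (c : Finset (Fin m) → ZMod 2) (x : Fin m → ZMod 2) : ZMod 2 :=
  ∑ S : Finset (Fin m), c S * ∏ i ∈ S, x i

lemma prodIndicator01 {m : ℕ} (U T : Finset (Fin m)) :
    (∏ i ∈ U, (if i ∈ T then (1 : ZMod 2) else 0)) = if U ⊆ T then 1 else 0 := by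
  split_ifs with h
  · exact Finset.prod_eq_one fun i hi => if_pos (h hi)
  · obtain ⟨i, hiU, hiT⟩ := Finset.not_subset.mp h
    exact Finset.prod_eq_zero hiU (if_neg hiT)

lemma sum_eval_indicator (m : ℕ) (c : Finset (Fin m) → ZMod 2) (S : Finset (Fin m)) :
    ∑ T ∈ S.powerset, evalPoly m c (fun i => if i ∈ T then 1 else 0) = c S := by
  unfold evalPoly
  rw [Finset.sum_comm]
  have h1 : ∀ U : Finset (Fin m),
      (∑ T ∈ S.powerset, c U * ∏ i ∈ U, (if i ∈ T then (1 : ZMod 2) else 0))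
        = if U = S then c S else 0 := by
    intro U
    simp only [prodIndicator01]
    rw [Finset.sum_congr rfl (fun T hT => rfl), ← Finset.mul_sum]
    have : (∑ T ∈ S.powerset, if U ⊆ T then (1 : ZMod 2) else 0)
        = ((S.powerset.filter (fun T => U ⊆ T)).card : ZMod 2) := by
      rw [Finset.sum_boole]
    rw [this]
    have hIcc : S.powerset.filter (fun T => U ⊆ T) = Finset.Icc U S := by
      rw [Finset.Icc_eq_filter_powerset]
    rw [hIcc]
    by_cases hUS : U ⊆ S
    · rw [Finset.card_Icc_finset hUS]
      by_cases hEq : U = S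
      · subst hEq; simp
      · have hlt : U.card < S.card :=
          Finset.card_lt_card (lt_of_le_of_ne hUS hEq)
        have : S.card - U.card ≠ 0 := by omega
        obtain ⟨k, hk⟩ := Nat.exists_eq_succ_of_ne_zero this
        rw [if_neg hEq, hk]
        have h2 : (2 : ZMod 2) = 0 := by decide
        push_cast
        rw [pow_succ, h2, mul_zero, mul_zero]
    · have : Finset.Icc U S = ∅ := Finset.Icc_eq_empty (by simpa using hUS)
      rw [this]
      have : U ≠ S := fun h => hUS (h ▸ le_refl S)
      simp [this]
  rw [Finset.sum_congr rfl (fun U _ => h1 U)]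
  simp

lemma exists_eval_ne_zero {m : ℕ} {c : Finset (Fin m) → ZMod 2} (hne : c ≠ 0) :
    ∃ x, evalPoly m c x ≠ 0 := by
  by_contra h
  push_neg at h
  apply hne
  funext S
  have := sum_eval_indicator m c S
  simp only [h] at this
  simpa using this.symm

/-- A nonzero multilinear polynomial in `m` variables over `F_2` of degree `r` has an
evaluation vector of Hamming weight at least `2^{m-r}`. -/
theorem eval_weight_lower_bound (m r : ℕ) (c : Finset (Fin m) → ZMod 2)
    (hne : c ≠ 0)
    (hdeg : ∀ S : Finset (Fin m), c S ≠ 0 → S.card ≤ r)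
    (hdeg' : ∃ S : Finset (Fin m), c S ≠ 0 ∧ S.card = r) :
    2 ^ (m - r) ≤ hammingNorm (evalPoly m c) := by
  classical
  obtain ⟨S, hcS, hScard⟩ := hdeg'
  -- restricted coefficients given outside values y
  set D : (Fin m → ZMod 2) → Finset (Fin m) → ZMod 2 :=
    fun y U => if U ⊆ S then
      ∑ T ∈ Finset.univ.filter (fun T => T ∩ S = U), c T * ∏ i ∈ T \ S, y i
    else 0 with hD
  -- restriction identity
  have hrestrict : ∀ (y x : Fin m → ZMod 2), (∀ i ∉ S, x i = y i) →
      evalPoly m c x = evalPoly m (D y) x := by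
    intro y x hx
    unfold evalPoly
    rw [← Finset.sum_fiberwise_of_maps_to (g := fun T => T ∩ S)
      (t := S.powerset) (fun T _ => Finset.mem_powerset.mpr Finset.inter_subset_right)]
    rw [← Finset.sum_subset (S.powerset.subset_univ)
      (fun U _ hU => by
        simp only [hD]
        rw [if_neg (fun h => hU (Finset.mem_powerset.mpr h)), zero_mul])]
    apply Finset.sum_congr rfl
    intro U hU
    rw [hD]
    simp only [Finset.mem_powerset.mp hU, if_pos, Finset.sum_mul]
    apply Finset.sum_congr rfl
    intro T hT
    obtain ⟨-, hTS⟩ := Finset.mem_filter.mp hT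
    rw [← hTS, ← Finset.prod_inter_mul_prod_diff T S x]
    have : ∏ i ∈ T \ S, x i = ∏ i ∈ T \ S, y i :=
      Finset.prod_congr rfl fun i hi => hx i (Finset.mem_sdiff.mp hi).2
    rw [this]; ring
  -- eval of D y depends only on values on S
  have honS : ∀ (y x x' : Fin m → ZMod 2), (∀ i ∈ S, x i = x' i) →
      evalPoly m (D y) x = evalPoly m (D y) x' := by
    intro y x x' hxx
    unfold evalPoly
    apply Finset.sum_congr rfl
    intro U _
    by_cases hUS : U ⊆ S
    · congr 1
      exact Finset.prod_congr rfl fun i hi => hxx i (hUS hi)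
    · rw [hD]; simp [hUS]
  -- D y S = c S
  have hDS : ∀ y, D y S = c S := by
    intro y
    rw [hD]
    simp only [if_pos (le_refl S)]
    rw [Finset.sum_eq_single S]
    · simp
    · intro T hT hTne
      have hST : S ⊆ T := by simpa using hT
      by_cases hc : c T = 0
      · simp [hc]
      · exact absurd (Finset.eq_of_subset_of_card_le hST
          (hScard ▸ hdeg T hc)).symm hTne
    · intro h
      exact absurd (Finset.mem_filter.mpr ⟨Finset.mem_univ S, by simp⟩) h
  -- for every outside assignment, find a nonzero evaluation point agreeing with it
  have hch : ∀ z : {i : Fin m // i ∉ S} → ZMod 2,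
      ∃ x, evalPoly m c x ≠ 0 ∧ ∀ (i : Fin m) (h : i ∉ S), x i = z ⟨i, h⟩ := by
    intro z
    set y : Fin m → ZMod 2 := fun i => if h : i ∉ S then z ⟨i, h⟩ else 0 with hy
    have hDne : D y ≠ 0 := by
      intro h
      apply hcS
      rw [← hDS y, h]; rfl
    obtain ⟨x₀, hx₀⟩ := exists_eval_ne_zero hDne
    refine ⟨fun i => if i ∈ S then x₀ i else y i, ?_, ?_⟩
    · have h1 := hrestrict y (fun i => if i ∈ S then x₀ i else y i)
        (fun i hi => by simp [hi])
      rw [h1, honS y _ x₀ (fun i hi => by simp [hi])]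
      exact hx₀
    · intro i h
      simp [h, hy]
  choose f hf1 hf2 using hch
  -- counting
  have hinj : Function.Injective
      (fun z : {i : Fin m // i ∉ S} → ZMod 2 =>
        (⟨f z, hf1 z⟩ : {x : Fin m → ZMod 2 // evalPoly m c x ≠ 0})) := by
    intro z z' hzz
    funext i
    obtain ⟨i, hi⟩ := i
    rw [← hf2 z i hi, ← hf2 z' i hi]
    exact congrFun (congrArg Subtype.val hzz) i
  have hcard := Fintype.card_le_of_injective _ hinj
  have h1 : Fintype.card ({i : Fin m // i ∉ S} → ZMod 2) = 2 ^ (m - r) := by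
    rw [Fintype.card_fun, ZMod.card, Fintype.card_subtype_compl,
      Fintype.card_coe, Fintype.card_fin, hScard]
  have h2 : Fintype.card {x : Fin m → ZMod 2 // evalPoly m c x ≠ 0}
      = hammingNorm (evalPoly m c) := by
    rw [Fintype.card_subtype]
    rfl
  rw [h1, h2] at hcard
  exact hcard
end

section
/- The Reed-Muller code RM(r,m), defined as the span of evaluation vectors of all monomials of degree at most r in m variables, has dimension Σ_{i=0}^{r} binomial(m,i) and minimum distance 2^{m−r}. -/
/-!
Over `𝔽₂`, the sum of the monomial `xˢ` over a subcube whose free directions are `g` is nonzero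
only when `g ⊆ s`, and it is `1` for `s = g`. So if `g` is maximal among the monomials of a
nonzero multilinear polynomial, the sum of the polynomial over every subcube with free directions
`g` is its (nonzero) coefficient of `xᵍ`. With the subcube through `0` this gives the linear
independence of the monomials, hence the dimension count; and since the `2 ^ (m - |g|)` parallel
subcubes are disjoint and each meets the support, a codeword of `RM(r,m)` has weight at least
`2 ^ (m - r)`. The monomial of a set of `r` variables attains this bound.
-/

/-- Evaluation vector of a multilinear monomial (a subset of `Fin m`). -/
def evalMon (m : ℕ) (g : Finset (Fin m)) (x : Fin m → ZMod 2) : ZMod 2 :=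
  ∏ i ∈ g, x i

/-- The monomial code generated by a set `M` of monomials. -/
def monomialCode (m : ℕ) (M : Set (Finset (Fin m))) :
    Submodule (ZMod 2) ((Fin m → ZMod 2) → ZMod 2) :=
  Submodule.span (ZMod 2) ((fun g => evalMon m g) '' M)

/-- The Reed–Muller code `RM(r,m)`: span of evaluation vectors of all monomials of
degree at most `r` in `m` variables. -/
def RM (r m : ℕ) : Submodule (ZMod 2) ((Fin m → ZMod 2) → ZMod 2) :=
  monomialCode m {g | g.card ≤ r}

open Finset

lemma card_filter_card_le_eq_sum_choose (α : Type*) [Fintype α] (r : ℕ) :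
    #({s : Finset α | #s ≤ r} : Finset _) = ∑ i ∈ range (r + 1), (Fintype.card α).choose i := by
  have hfilter :
      ({s : Finset α | #s ≤ r} : Finset _) = ({s | #s ∈ range (r + 1)} : Finset _) := by
    simp
  simp [hfilter, ← sum_card_fiberwise_eq_card_filter]

namespace ReedMuller

variable {m : ℕ}

def subcube (g : Finset (Fin m)) (y : Fin m → ZMod 2) : Finset (Fin m → ZMod 2) :=
  Fintype.piFinset fun i => if i ∈ g then univ else {y i}

lemma mem_subcube {g : Finset (Fin m)} {y x : Fin m → ZMod 2} :
    x ∈ subcube g y ↔ ∀ i ∉ g, x i = y i := by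
  simp only [subcube, Fintype.mem_piFinset]
  refine forall_congr' fun i => ?_
  by_cases hi : i ∈ g <;> simp [hi]

lemma card_subcube (g : Finset (Fin m)) (y : Fin m → ZMod 2) :
    #(subcube g y) = 2 ^ #g := by
  simp [subcube, apply_ite Finset.card, Finset.prod_ite_mem]

lemma sum_subcube_evalMon (g s : Finset (Fin m)) (y : Fin m → ZMod 2) :
    ∑ x ∈ subcube g y, evalMon m s x = if g ⊆ s then evalMon m (s \ g) y else 0 := by
  have hmon : ∀ x, evalMon m s x = ∏ i, if i ∈ s then x i else 1 := fun x =>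
    (Fintype.prod_ite_mem s x).symm
  rw [subcube, sum_congr rfl fun x _ => hmon x,
    ← prod_univ_sum _ fun i (a : ZMod 2) => if i ∈ s then a else 1]
  split_ifs with hgs
  · rw [evalMon, ← Fintype.prod_ite_mem (s \ g) y]
    refine Fintype.prod_congr _ _ fun i => ?_
    by_cases hig : i ∈ g
    · simp only [hig, hgs hig, ↓reduceIte, mem_sdiff, not_true_eq_false, and_false]
      decide
    · by_cases his : i ∈ s <;> simp [hig, his]
  · obtain ⟨i, hig, his⟩ := not_subset.mp hgs
    exact prod_eq_zero (mem_univ i) (by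
      simp only [hig, his, ↓reduceIte, sum_const, card_univ, ZMod.card, nsmul_eq_mul, mul_one]
      decide)

lemma sum_subcube_eq_coeff {c : Finset (Fin m) → ZMod 2} {g : Finset (Fin m)}
    (hg : ∀ s, g ⊂ s → c s = 0) (y : Fin m → ZMod 2) :
    ∑ x ∈ subcube g y, (∑ s, c s • evalMon m s) x = c g := by
  simp only [Finset.sum_apply, Pi.smul_apply, smul_eq_mul]
  rw [sum_comm]
  simp only [← mul_sum, sum_subcube_evalMon]
  rw [sum_eq_single g]
  · simp [evalMon]
  · intro s _ hsg
    split_ifs with hgs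
    · simp [hg s (ssubset_of_subset_of_ne hgs (Ne.symm hsg))]
    · simp
  · simp

lemma exists_maximal_coeff_ne_zero {c : Finset (Fin m) → ZMod 2} (hc : c ≠ 0) :
    ∃ g, c g ≠ 0 ∧ ∀ s, g ⊂ s → c s = 0 := by
  obtain ⟨g, hg⟩ := (Set.toFinite {s | c s ≠ 0}).exists_maximal
    (Function.ne_iff.mp hc)
  exact ⟨g, hg.prop, fun s hgs => by_contra fun hs => hg.not_gt hs hgs⟩

lemma linearIndependent_evalMon : LinearIndependent (ZMod 2) (evalMon m) := by
  rw [Fintype.linearIndependent_iff]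
  intro c hc
  by_contra hne
  obtain ⟨g, hcg, hg⟩ := exists_maximal_coeff_ne_zero (c := c) (funext_iff.not.mpr hne)
  have htop := sum_subcube_eq_coeff hg 0
  rw [hc] at htop
  simp only [Pi.zero_apply, sum_const_zero] at htop
  exact hcg htop.symm

lemma two_pow_le_hammingNorm {c : Finset (Fin m) → ZMod 2} {g : Finset (Fin m)}
    (hcg : c g ≠ 0) (hg : ∀ s, g ⊂ s → c s = 0) :
    2 ^ (m - #g) ≤ hammingNorm (∑ s, c s • evalMon m s) := by
  set v := ∑ s, c s • evalMon m s
  have hfiber (y : Fin m → ZMod 2) : ∃ x ∈ subcube g y, v x ≠ 0 :=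
    exists_ne_zero_of_sum_ne_zero (by rwa [sum_subcube_eq_coeff hg])
  have hsurj : Set.SurjOn (fun (x : Fin m → ZMod 2) i => if i ∈ g then 0 else x i)
      ({x | v x ≠ 0} : Finset _) (subcube gᶜ 0) := by
    intro y hy
    obtain ⟨x, hx, hvx⟩ := hfiber y
    refine ⟨x, by simpa using hvx, funext fun i => ?_⟩
    rw [mem_coe, mem_subcube] at hy
    rw [mem_subcube] at hx
    by_cases hi : i ∈ g
    · simp [hi, hy i (by simpa using hi)]
    · simp [hi, hx i hi]
  calc 2 ^ (m - #g) = #(subcube gᶜ 0) := by rw [card_subcube, card_compl, Fintype.card_fin]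
    _ ≤ hammingNorm v := card_le_card_of_surjOn _ hsurj

lemma hammingNorm_evalMon (g : Finset (Fin m)) : hammingNorm (evalMon m g) = 2 ^ (m - #g) := by
  have hsupp : ({x | evalMon m g x ≠ 0} : Finset _) = subcube gᶜ 1 := by
    ext x
    simp only [mem_filter_univ, evalMon, prod_ne_zero_iff, mem_subcube, not_not, mem_compl,
      Pi.one_apply]
    exact forall₂_congr fun i _ => by generalize x i = a; revert a; decide
  rw [hammingNorm, hsupp, card_subcube, card_compl, Fintype.card_fin]

lemma exists_coeff_of_mem_RM {r : ℕ} {v : (Fin m → ZMod 2) → ZMod 2} (hv : v ∈ RM r m) :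
    ∃ c : Finset (Fin m) → ZMod 2, (∀ s, c s ≠ 0 → #s ≤ r) ∧ ∑ s, c s • evalMon m s = v := by
  obtain ⟨l, hl, rfl⟩ := (Finsupp.mem_span_image_iff_linearCombination (ZMod 2)).mp hv
  refine ⟨l, fun s hs => by_contra fun hsr => hs ((Finsupp.mem_supported' (ZMod 2) l).mp hl s hsr),
    ?_⟩
  exact (Finsupp.sum_fintype l (fun s a => a • evalMon m s) fun _ => zero_smul _ _).symm

lemma two_pow_le_hammingNorm_of_mem_RM {r : ℕ} {v : (Fin m → ZMod 2) → ZMod 2}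
    (hv : v ∈ RM r m) (hv0 : v ≠ 0) : 2 ^ (m - r) ≤ hammingNorm v := by
  obtain ⟨c, hcr, rfl⟩ := exists_coeff_of_mem_RM hv
  obtain ⟨g, hcg, hg⟩ := exists_maximal_coeff_ne_zero (c := c) (by rintro rfl; simp at hv0)
  calc 2 ^ (m - r) ≤ 2 ^ (m - #g) :=
        Nat.pow_le_pow_right two_pos (Nat.sub_le_sub_left (hcr g hcg) m)
    _ ≤ _ := two_pow_le_hammingNorm hcg hg

lemma finrank_RM (r m : ℕ) :
    Module.finrank (ZMod 2) (RM r m) = ∑ i ∈ range (r + 1), m.choose i := by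
  rw [RM, monomialCode, Set.image_eq_range, finrank_span_eq_card
    (b := fun g : {g : Finset (Fin m) | #g ≤ r} => evalMon m g)
    (linearIndependent_evalMon.comp _ Subtype.val_injective)]
  simpa using card_filter_card_le_eq_sum_choose (Fin m) r

end ReedMuller

open ReedMuller

/-- `RM(r,m)` has dimension `∑_{i=0}^r C(m,i)` and minimum distance `2^{m−r}`. -/
theorem RM_dim_and_min_distance (m r : ℕ) (hr : r ≤ m) :
    Module.finrank (ZMod 2) (RM r m) = ∑ i ∈ Finset.range (r + 1), m.choose i ∧
    IsLeast {w : ℕ | ∃ v ∈ RM r m, v ≠ 0 ∧ hammingNorm v = w} (2 ^ (m - r)) := by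
  refine ⟨finrank_RM r m, ?_, ?_⟩
  · obtain ⟨g, -, hg⟩ := exists_subset_card_eq (s := (univ : Finset (Fin m)))
      (by simpa using hr)
    exact ⟨evalMon m g, Submodule.subset_span ⟨g, hg.le, rfl⟩,
      linearIndependent_evalMon.ne_zero g, by rw [hammingNorm_evalMon, hg]⟩
  · rintro w ⟨v, hv, hv0, rfl⟩
    exact two_pow_le_hammingNorm_of_mem_RM hv hv0
end

section
/- If M_C is a decreasing set of monomials (closed under taking divisors), then the monomial code C(M_C) is invariant under all translations x ↦ x + b, b ∈ F_2^m. -/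
/-- The coordinate permutation of vectors induced by the translation `x ↦ x + b`. -/
def translateMap (m : ℕ) (b : Fin m → ZMod 2) :
    ((Fin m → ZMod 2) → ZMod 2) →ₗ[ZMod 2] ((Fin m → ZMod 2) → ZMod 2) :=
  LinearMap.funLeft (ZMod 2) (ZMod 2) (fun u => u + b)

lemma translate_evalMon (m : ℕ) (b : Fin m → ZMod 2) (g : Finset (Fin m)) :
    translateMap m b (evalMon m g) =
      ∑ g' ∈ g.powerset, (∏ i ∈ g \ g', b i) • evalMon m g' := by
  funext x
  simp only [translateMap, LinearMap.funLeft_apply, evalMon, Finset.sum_apply,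
    Pi.smul_apply, smul_eq_mul, Pi.add_apply]
  rw [Finset.prod_add]
  exact Finset.sum_congr rfl fun t _ => mul_comm _ _

lemma translate_mem (m : ℕ) (M : Set (Finset (Fin m)))
    (hdec : ∀ g ∈ M, ∀ g' : Finset (Fin m), g' ⊆ g → g' ∈ M)
    (b : Fin m → ZMod 2) :
    Submodule.map (translateMap m b) (monomialCode m M) ≤ monomialCode m M := by
  rw [monomialCode, Submodule.map_span, Submodule.span_le]
  rintro _ ⟨_, ⟨g, hg, rfl⟩, rfl⟩
  rw [translate_evalMon]
  exact Submodule.sum_mem _ fun g' hg' =>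
    Submodule.smul_mem _ _ (Submodule.subset_span
      ⟨g', hdec g hg g' (Finset.mem_powerset.mp hg'), rfl⟩)

/-- If `M` is a decreasing set of monomials (closed under taking divisors), then the
monomial code `C(M)` is invariant under all translations `x ↦ x + b`, `b ∈ F_2^m`. -/
theorem decreasing_implies_translation_invariant (m : ℕ) (M : Set (Finset (Fin m)))
    (hdec : ∀ g ∈ M, ∀ g' : Finset (Fin m), g' ⊆ g → g' ∈ M) :
    ∀ b : Fin m → ZMod 2,
      Submodule.map (translateMap m b) (monomialCode m M) = monomialCode m M := by
  intro b
  refine le_antisymm (translate_mem m M hdec b) ?_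
  intro f hf
  refine ⟨translateMap m b f, translate_mem m M hdec b ⟨f, hf, rfl⟩, ?_⟩
  funext x
  simp only [translateMap, LinearMap.funLeft_apply]
  congr 1
  funext i
  have h2 : b i + b i = 0 := by
    have : (2 : ZMod 2) = 0 := by decide
    calc b i + b i = 2 * b i := by ring
    _ = 0 := by rw [this]; ring
  simp [Pi.add_apply, add_assoc, h2]
end

section
/- Let M_C be a decreasing set of monomials in m variables and q a variable index. Then the trivial projection of the monomial code C(M_C) in direction e_q (the q-th standard basis vector) is the monomial code in the remaining m−1 variables with generating set {g : x_q·g ∈ M_C}, i.e., the partial derivative of the generating set with respect to x_q. -/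
/-- The `q`-th standard basis vector `e_q` of `F_2^m`. -/
def stdBasis (m : ℕ) (q : Fin m) : Fin m → ZMod 2 :=
  fun i => if i = q then 1 else 0

/-- The directional derivative of vectors in direction `b`: `v ↦ (u ↦ v(u+b) + v(u))`. -/
def derivMap (m : ℕ) (b : Fin m → ZMod 2) :
    ((Fin m → ZMod 2) → ZMod 2) →ₗ[ZMod 2] ((Fin m → ZMod 2) → ZMod 2) :=
  translateMap m b + LinearMap.id

/-- Restriction of a length-`2^m` vector to the evaluation points whose `q`-th
coordinate is `0`. -/
def restrictMap (m : ℕ) (q : Fin m) :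
    ((Fin m → ZMod 2) → ZMod 2) →ₗ[ZMod 2]
      ({u : Fin m → ZMod 2 // u q = 0} → ZMod 2) :=
  LinearMap.funLeft (ZMod 2) (ZMod 2) Subtype.val

/-- For a decreasing set `M` of monomials, the trivial projection of the monomial code
`C(M)` in direction `e_q` (restriction of the directional derivatives to the points with
`q`-th coordinate `0`) is the monomial code in the remaining variables with generating
set `{g : x_q · g ∈ M}`, i.e. the partial derivative of the generating set w.r.t. `x_q`. -/
theorem trivial_projection_of_monomialCode (m : ℕ) (q : Fin m)
    (M : Set (Finset (Fin m)))
    (hdec : ∀ g ∈ M, ∀ g' : Finset (Fin m), g' ⊆ g → g' ∈ M) :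
    Submodule.map ((restrictMap m q).comp (derivMap m (stdBasis m q)))
        (monomialCode m M) =
      Submodule.span (ZMod 2)
        {v : {u : Fin m → ZMod 2 // u q = 0} → ZMod 2 |
          ∃ g : Finset (Fin m), q ∉ g ∧ insert q g ∈ M ∧
            v = fun u => ∏ i ∈ g, u.val i} := by
  set L := (restrictMap m q).comp (derivMap m (stdBasis m q)) with hL
  have key : ∀ g : Finset (Fin m),
      L (evalMon m g) = if q ∈ g then (fun u : {u : Fin m → ZMod 2 // u q = 0} =>
        ∏ i ∈ g.erase q, u.val i) else 0 := by
    intro g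
    funext u
    have hLu : L (evalMon m g) u
        = evalMon m g (u.val + stdBasis m q) + evalMon m g u.val := rfl
    by_cases hq : q ∈ g
    · simp only [hq, if_true]
      have h1 : evalMon m g u.val = 0 := by
        unfold evalMon
        rw [← Finset.mul_prod_erase g _ hq, u.property, zero_mul]
      have h2 : evalMon m g (u.val + stdBasis m q) = ∏ i ∈ g.erase q, u.val i := by
        unfold evalMon
        rw [← Finset.mul_prod_erase g _ hq]
        have : (u.val + stdBasis m q) q = 1 := by
          simp [stdBasis, u.property]
        rw [this, one_mul]
        refine Finset.prod_congr rfl fun i hi => ?_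
        have : stdBasis m q i = 0 := by
          simp [stdBasis, Finset.ne_of_mem_erase hi]
        simp [this]
      rw [hLu, h1, h2, add_zero]
    · simp only [hq, if_false]
      have h2 : evalMon m g (u.val + stdBasis m q) = evalMon m g u.val := by
        unfold evalMon
        refine Finset.prod_congr rfl fun i hi => ?_
        have : stdBasis m q i = 0 := by
          simp [stdBasis]
          rintro rfl; exact hq hi
        simp [this]
      rw [hLu, h2]
      have : evalMon m g u.val + evalMon m g u.val = 2 * evalMon m g u.val := by ring
      rw [this]
      simp [show (2 : ZMod 2) = 0 from rfl]
  unfold monomialCode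
  rw [Submodule.map_span]
  apply le_antisymm
  · rw [Submodule.span_le]
    rintro _ ⟨_, ⟨g, hg, rfl⟩, rfl⟩
    by_cases hq : q ∈ g
    · apply Submodule.subset_span
      refine ⟨g.erase q, Finset.notMem_erase q g, ?_, ?_⟩
      · rwa [Finset.insert_erase hq]
      · rw [key g, if_pos hq]
    · rw [key g, if_neg hq]
      exact (Submodule.span (ZMod 2) _).zero_mem
  · rw [Submodule.span_le]
    rintro _ ⟨g, hqg, hgM, rfl⟩
    apply Submodule.subset_span
    refine ⟨evalMon m (insert q g), ⟨insert q g, hgM, rfl⟩, ?_⟩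
    rw [key (insert q g), if_pos (Finset.mem_insert_self q g),
      Finset.erase_insert hqg]
end

section
/- For every integer j with 0 ≤ j ≤ j* = r·binomial(m,r)/lcm(m,r), there exists a set S of exactly j·lcm(m,r)/r many r-element subsets of {0,...,m−1} such that every element of {0,...,m−1} belongs to exactly j·lcm(m,r)/m members of S. -/
/-!
Write `m = M g` and `r = R g` with `g = gcd m r`, so that `M` and `R` are coprime,
`lcm m r / r = M` and `lcm m r / m = R`, and identify `{0, …, m-1}` with `ZMod M × ZMod g`.
Call a set balanced if each of its `g` slices `{a | (a, b) ∈ A}` has `R` elements.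
Partition the `r`-sets into blocks: the translates of a balanced set along `ZMod M × {0}`,
which are `M` distinct sets (the sum of a slice would otherwise be fixed by a shift, and `R` is a
unit mod `M`), and the full translation orbit of an unbalanced set. Every block is a regular
family, so double counting makes its size a multiple of `M`, and blocks of the first kind have
size exactly `M`. If some set is unbalanced then `R < M`, and there are at least
`C(M, R) ^ g ≥ M g` balanced sets, as many as the largest block has members; so greedily taking
large blocks and then filling up with blocks of size `M` reaches every multiple `j M ≤ C(m, r)`,
and the union of the chosen blocks is the required family.
-/

open Finset
open scoped Pointwise

section Selection

variable {ι : Type*} [DecidableEq ι] (f : ι → ℕ)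

lemma exists_subset_sum_le_le_add (T : Finset ι) {c N : ℕ} (hT : ∀ i ∈ T, f i ≤ c)
    (hN : N ≤ ∑ i ∈ T, f i + c) :
    ∃ D ⊆ T, ∑ i ∈ D, f i ≤ N ∧ N ≤ ∑ i ∈ D, f i + c := by
  induction T using Finset.induction_on generalizing N with
  | empty => exact ⟨∅, Subset.rfl, by simp, by simpa using hN⟩
  | insert i T hi ih =>
    rw [sum_insert hi] at hN
    have hT' : ∀ k ∈ T, f k ≤ c := fun k hk => hT k (mem_insert_of_mem hk)
    by_cases hNT : N ≤ ∑ k ∈ T, f k + c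
    · obtain ⟨D, hDT, hD⟩ := ih hT' hNT
      exact ⟨D, hDT.trans (subset_insert i T), hD⟩
    · have hic := hT i (mem_insert_self i T)
      obtain ⟨D, hDT, hD⟩ := ih hT' (N := N - f i) (by omega)
      refine ⟨insert i D, insert_subset_insert i hDT, ?_⟩
      rw [sum_insert fun h => hi (hDT h)]
      omega

/-- Greedy subset sum: take non-unit items while they fit, then fill the gap with unit items. -/
lemma exists_subset_sum_eq_of_dvd (B : Finset ι) {u N : ℕ} (hu : 0 < u)
    (hdvd : ∀ i ∈ B, u ∣ f i) (hle : ∀ i ∈ B, f i ≤ u * #{i ∈ B | f i = u})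
    (hN : u ∣ N) (hNB : N ≤ ∑ i ∈ B, f i) : ∃ D ⊆ B, ∑ i ∈ D, f i = N := by
  set units := {i ∈ B | f i = u}
  have hunits : ∑ i ∈ units, f i = u * #units := by
    rw [sum_congr rfl fun i hi => (mem_filter.1 hi).2, sum_const, smul_eq_mul, mul_comm]
  have hsplit : ∑ i ∈ units, f i + ∑ i ∈ {i ∈ B | f i ≠ u}, f i = ∑ i ∈ B, f i :=
    sum_filter_add_sum_filter_not B (fun i => f i = u) f
  obtain ⟨D, hDB, hDN, hND⟩ := exists_subset_sum_le_le_add f {i ∈ B | f i ≠ u}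
    (fun i hi => hle i (mem_filter.1 hi).1) (N := N) (by omega)
  have hDB' : D ⊆ B := hDB.trans (filter_subset _ _)
  obtain ⟨k, hk⟩ : u ∣ N - ∑ i ∈ D, f i :=
    Nat.dvd_sub hN (dvd_sum fun i hi => hdvd i (hDB' hi))
  obtain ⟨C, hCu, hCk⟩ := exists_subset_card_eq (s := units) (n := k)
    (Nat.le_of_mul_le_mul_left (by omega) hu)
  have hDC : Disjoint D C :=
    (disjoint_filter_filter_not B B (fun i => f i = u)).symm.mono hDB hCu
  refine ⟨D ∪ C, union_subset hDB' (hCu.trans (filter_subset _ _)), ?_⟩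
  rw [sum_union hDC, sum_congr rfl fun i hi => (mem_filter.1 (hCu hi)).2, sum_const,
    smul_eq_mul, hCk]
  rw [mul_comm] at hk
  omega

end Selection

section Translates

variable {K α : Type*} [AddGroup K] [Fintype K] [AddGroup α] [DecidableEq α]

def vaddOrbit (φ : K →+ α) (A : Finset α) : Finset (Finset α) :=
  univ.image fun k => φ k +ᵥ A

variable {φ : K →+ α} {A B : Finset α}

lemma mem_vaddOrbit : B ∈ vaddOrbit φ A ↔ ∃ k, φ k +ᵥ A = B := by
  simp [vaddOrbit]

lemma self_mem_vaddOrbit : A ∈ vaddOrbit φ A :=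
  mem_vaddOrbit.2 ⟨0, by simp⟩

lemma card_of_mem_vaddOrbit (hB : B ∈ vaddOrbit φ A) : #B = #A := by
  obtain ⟨k, rfl⟩ := mem_vaddOrbit.1 hB
  exact card_vadd_finset _ _

lemma card_vaddOrbit_le : #(vaddOrbit φ A) ≤ Fintype.card K :=
  card_image_le.trans_eq card_univ

lemma vaddOrbit_eq_of_mem (hB : B ∈ vaddOrbit φ A) : vaddOrbit φ B = vaddOrbit φ A := by
  obtain ⟨k, rfl⟩ := mem_vaddOrbit.1 hB
  ext C
  simp only [mem_vaddOrbit, vadd_vadd, ← map_add]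
  exact ⟨fun ⟨l, h⟩ => ⟨l + k, h⟩, fun ⟨l, h⟩ => ⟨l - k, by simpa using h⟩⟩

lemma card_filter_mem_vaddOrbit_of_injective (hφ : Function.Injective fun k => φ k +ᵥ A)
    (x : α) : #{B ∈ vaddOrbit φ A | x ∈ B} = #{k | x ∈ φ k +ᵥ A} := by
  rw [vaddOrbit, filter_image, card_image_of_injective _ hφ]

variable [Fintype α]

lemma card_filter_mem_vaddOrbit_id_le (A : Finset α) (x y : α) :
    #{B ∈ vaddOrbit (.id α) A | x ∈ B} ≤ #{B ∈ vaddOrbit (.id α) A | y ∈ B} := by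
  refine card_le_card_of_injOn ((y - x) +ᵥ ·) (fun B hB => ?_) (AddAction.injective _).injOn
  simp only [coe_filter, Set.mem_ofPred_eq, mem_vaddOrbit] at hB ⊢
  obtain ⟨⟨k, rfl⟩, hx⟩ := hB
  refine ⟨⟨y - x + k, by simp [vadd_vadd]⟩, ?_⟩
  simpa using vadd_mem_vadd_finset (a := y - x) hx

lemma card_filter_mem_vaddOrbit_id_mul_card (A : Finset α) (x : α) :
    #{B ∈ vaddOrbit (.id α) A | x ∈ B} * Fintype.card α = #(vaddOrbit (.id α) A) * #A := by
  have h := sum_card (B := vaddOrbit (.id α) A) fun y =>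
    (card_filter_mem_vaddOrbit_id_le A y x).antisymm (card_filter_mem_vaddOrbit_id_le A x y)
  rw [sum_congr rfl fun B hB => card_of_mem_vaddOrbit hB, sum_const, smul_eq_mul] at h
  rw [h, mul_comm]

end Translates

lemma ZMod.eq_zero_of_vadd_finset_eq_self {M : ℕ} {s : Finset (ZMod M)} {t : ZMod M}
    (h : t +ᵥ s = s) (hs : Nat.Coprime #s M) : t = 0 := by
  have hsum : #s • t + ∑ a ∈ s, a = ∑ a ∈ s, a := by
    conv_rhs => rw [← h]
    rw [vadd_finset_def, sum_image fun a _ b _ hab => (AddAction.injective t) hab]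
    simp only [vadd_eq_add]
    rw [sum_add_distrib, sum_const]
  rw [add_eq_right, nsmul_eq_mul] at hsum
  exact ((ZMod.isUnit_iff_coprime _ _).2 hs).mul_right_eq_zero.1 hsum

lemma Nat.self_le_choose {n k : ℕ} (hk : 1 ≤ k) (hkn : k < n) : n ≤ n.choose k := by
  induction k generalizing n with
  | zero => omega
  | succ k ih =>
    obtain ⟨n, rfl⟩ : ∃ n', n = n' + 1 := ⟨n - 1, by omega⟩
    rw [Nat.choose_succ_succ']
    rcases Nat.eq_zero_or_pos k with rfl | hk0
    · simp
    · have := ih (n := n) hk0 (by omega)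
      have := Nat.choose_pos (show k + 1 ≤ n by omega)
      omega

section Slices

variable {α β : Type*} [Fintype α] [DecidableEq α] [DecidableEq β]

def prodSlice (A : Finset (α × β)) (b : β) : Finset α := {a | (a, b) ∈ A}

@[simp] lemma mem_prodSlice {A : Finset (α × β)} {a : α} {b : β} :
    a ∈ prodSlice A b ↔ (a, b) ∈ A := by
  simp [prodSlice]

lemma prodSlice_vadd [AddGroup α] [AddGroup β] (A : Finset (α × β)) (v : α × β) (b : β) :
    prodSlice (v +ᵥ A) b = v.1 +ᵥ prodSlice A (-v.2 + b) := by
  ext a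
  rw [mem_prodSlice, ← neg_vadd_mem_iff, ← neg_vadd_mem_iff, mem_prodSlice]
  rfl

def IsBalanced (R : ℕ) (A : Finset (α × β)) : Prop := ∀ b, #(prodSlice A b) = R

variable {R : ℕ} {A : Finset (α × β)}

lemma IsBalanced.vadd [AddGroup α] [AddGroup β] (hA : IsBalanced R A) (v : α × β) :
    IsBalanced R (v +ᵥ A) := fun b => by
  rw [prodSlice_vadd, card_vadd_finset, hA]

lemma isBalanced_vadd_iff [AddGroup α] [AddGroup β] (v : α × β) :
    IsBalanced R (v +ᵥ A) ↔ IsBalanced R A :=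
  ⟨fun h => by simpa using h.vadd (-v), fun h => h.vadd v⟩

variable [Fintype β]

lemma card_eq_sum_card_prodSlice (A : Finset (α × β)) : #A = ∑ b, #(prodSlice A b) := by
  rw [card_eq_sum_card_fiberwise fun x _ => mem_univ x.2]
  refine sum_congr rfl fun b _ => ?_
  have : {x ∈ A | x.2 = b} = (prodSlice A b).map (.sectL α b) := by
    ext ⟨a, c⟩
    simp only [mem_filter, mem_map, mem_prodSlice, Function.Embedding.sectL_apply, Prod.mk.injEq]
    aesop
  rw [this, card_map]

instance (R : ℕ) : DecidablePred (IsBalanced (α := α) (β := β) R) :=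
  fun A => inferInstanceAs (Decidable (∀ b, #(prodSlice A b) = R))

def ofSlices (f : β → Finset α) : Finset (α × β) := {x | x.1 ∈ f x.2}

lemma prodSlice_ofSlices (f : β → Finset α) (b : β) : prodSlice (ofSlices f) b = f b := by
  ext a
  simp [ofSlices]

lemma choose_pow_le_card_isBalanced (R : ℕ) :
    (Fintype.card α).choose R ^ Fintype.card β ≤ #{A : Finset (α × β) | IsBalanced R A} := by
  have : #(Fintype.piFinset fun _ : β => powersetCard R (univ : Finset α)) =
      (Fintype.card α).choose R ^ Fintype.card β := by
    simp [Fintype.card_piFinset, prod_const]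
  rw [← this]
  refine card_le_card_of_injOn ofSlices (fun f hf => ?_) fun f _ g _ hfg => ?_
  · refine mem_coe.2 (mem_filter.2 ⟨mem_univ _, fun b => ?_⟩)
    rw [prodSlice_ofSlices]
    exact (mem_powersetCard.1 (Fintype.mem_piFinset.1 (mem_coe.1 hf) b)).2
  · funext b
    rw [← prodSlice_ofSlices f, hfg, prodSlice_ofSlices]

lemma isBalanced_univ : IsBalanced (Fintype.card α) (univ : Finset (α × β)) := fun b => by
  simp [prodSlice, card_univ]

lemma mul_card_le_card_isBalanced (hR : 1 ≤ R) (hRα : R < Fintype.card α) :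
    Fintype.card α * Fintype.card β ≤ #{A : Finset (α × β) | IsBalanced R A} := by
  refine le_trans ?_ (choose_pow_le_card_isBalanced R)
  set C := (Fintype.card α).choose R
  have hC : Fintype.card α ≤ C := Nat.self_le_choose hR hRα
  rcases Nat.eq_zero_or_pos (Fintype.card β) with hG | hG
  · simp [hG]
  · have hGC : Fintype.card β ≤ C ^ (Fintype.card β - 1) := by
      have := Nat.lt_pow_self (n := Fintype.card β - 1) (a := C) (by omega)
      omega
    calc Fintype.card α * Fintype.card β ≤ C * C ^ (Fintype.card β - 1) :=
          Nat.mul_le_mul hC hGC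
      _ = C ^ Fintype.card β := by rw [← pow_succ']; congr 1; omega

end Slices

section Equitable

variable {V W : Type*} [DecidableEq V] [DecidableEq W]

def IsEquitableFamily (S : Finset (Finset V)) (r n c : ℕ) : Prop :=
  (∀ A ∈ S, #A = r) ∧ #S = n ∧ ∀ x, #{A ∈ S | x ∈ A} = c

lemma IsEquitableFamily.map {S : Finset (Finset V)} {r n c : ℕ} (hS : IsEquitableFamily S r n c)
    (e : V ≃ W) : IsEquitableFamily (S.map (mapEmbedding e.toEmbedding).toEmbedding) r n c := by
  obtain ⟨hcard, hsize, hdeg⟩ := hS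
  refine ⟨fun A hA => ?_, by rw [card_map, hsize], fun x => ?_⟩
  · obtain ⟨B, hB, rfl⟩ := mem_map.1 hA
    simp [hcard B hB]
  · rw [filter_map, card_map, ← hdeg (e.symm x)]
    congr 1
    ext A
    simp [mem_map_equiv]

lemma card_filter_mem_biUnion_mul {D : Finset (Finset (Finset V))}
    (hD : (D : Set (Finset (Finset V))).PairwiseDisjoint id) {p q : ℕ}
    (h : ∀ b ∈ D, ∀ x, #{B ∈ b | x ∈ B} * p = #b * q) (x : V) :
    #{B ∈ D.biUnion id | x ∈ B} * p = #(D.biUnion id) * q := by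
  rw [filter_biUnion, card_biUnion (hD.mono fun b => filter_subset _ _), card_biUnion hD,
    sum_mul, sum_mul]
  exact sum_congr rfl fun b hb => h b hb x

end Equitable

section Blocks

variable {M : ℕ} {β : Type*} [AddGroup β] [DecidableEq β] {R : ℕ}

lemma injective_inl_vadd [NeZero M] {A : Finset (ZMod M × β)} (hcop : M.Coprime R)
    (hA : IsBalanced R A) :
    Function.Injective fun t : ZMod M => AddMonoidHom.inl _ β t +ᵥ A := by
  intro s t hst
  have h : (-t + s) +ᵥ prodSlice A 0 = prodSlice A 0 := by
    have := congrArg (fun B => prodSlice (-(AddMonoidHom.inl (ZMod M) β t) +ᵥ B) 0) hst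
    simpa [prodSlice_vadd, vadd_vadd] using this
  have := ZMod.eq_zero_of_vadd_finset_eq_self h (by rw [hA 0]; exact hcop.symm)
  rwa [neg_add_eq_zero, eq_comm] at this

variable [NeZero M] [Fintype β]

variable (R) in
def block (A : Finset (ZMod M × β)) : Finset (Finset (ZMod M × β)) :=
  if IsBalanced R A then vaddOrbit (.inl (ZMod M) β) A else vaddOrbit (.id _) A

variable {A B : Finset (ZMod M × β)}

lemma self_mem_block : A ∈ block R A := by
  unfold block; split_ifs <;> exact self_mem_vaddOrbit

lemma card_of_mem_block (hB : B ∈ block R A) : #B = #A := by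
  unfold block at hB; split_ifs at hB <;> exact card_of_mem_vaddOrbit hB

lemma block_eq_of_mem (hB : B ∈ block R A) : block R B = block R A := by
  have hBA : IsBalanced R B ↔ IsBalanced R A := by
    obtain ⟨v, rfl⟩ : ∃ v, v +ᵥ A = B := by
      unfold block at hB
      split_ifs at hB <;> obtain ⟨k, hk⟩ := mem_vaddOrbit.1 hB <;> exact ⟨_, hk⟩
    exact isBalanced_vadd_iff v
  unfold block at hB ⊢
  simp only [hBA]
  split_ifs at hB ⊢ <;> exact vaddOrbit_eq_of_mem hB

lemma card_block_of_isBalanced (hcop : M.Coprime R) (hA : IsBalanced R A) :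
    #(block R A) = M := by
  rw [block, if_pos hA, vaddOrbit, card_image_of_injective _ (injective_inl_vadd hcop hA),
    card_univ, ZMod.card]

lemma card_filter_mem_block_of_isBalanced (hcop : M.Coprime R) (hA : IsBalanced R A)
    (x : ZMod M × β) : #{B ∈ block R A | x ∈ B} = R := by
  rw [block, if_pos hA, card_filter_mem_vaddOrbit_of_injective (injective_inl_vadd hcop hA),
    ← hA x.2]
  have : ({t | x ∈ AddMonoidHom.inl (ZMod M) β t +ᵥ A} : Finset (ZMod M)) =
      (prodSlice A x.2).image (x.1 - ·) := by
    ext t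
    simp only [← neg_vadd_mem_iff, AddMonoidHom.inl_apply, Prod.neg_mk, neg_zero, vadd_eq_add,
      mem_filter, mem_univ, true_and, mem_image, mem_prodSlice]
    rw [show ((-t, 0) : ZMod M × β) + x = (-t + x.1, x.2) by ext <;> simp]
    constructor
    · exact fun h => ⟨_, h, by ring⟩
    · rintro ⟨a, ha, rfl⟩
      convert ha using 2
      ring
  rw [this, card_image_of_injective _ sub_right_injective]

lemma card_block_le : #(block R A) ≤ M * Fintype.card β := by
  unfold block
  split_ifs
  · exact card_vaddOrbit_le.trans (by
      rw [ZMod.card]; exact Nat.le_mul_of_pos_right _ Fintype.card_pos)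
  · exact card_vaddOrbit_le.trans (by simp [ZMod.card])

lemma card_filter_mem_block_mul (hcop : M.Coprime R) (hA : #A = Fintype.card β * R)
    (x : ZMod M × β) : #{B ∈ block R A | x ∈ B} * M = #(block R A) * R := by
  by_cases hbal : IsBalanced R A
  · rw [card_filter_mem_block_of_isBalanced hcop hbal, card_block_of_isBalanced hcop hbal,
      mul_comm]
  · have h := card_filter_mem_vaddOrbit_id_mul_card A x
    rw [Fintype.card_prod, ZMod.card, hA] at h
    rw [block, if_neg hbal]
    apply Nat.eq_of_mul_eq_mul_right (Fintype.card_pos (α := β))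
    rw [mul_assoc, h]
    ring

variable (M β R) in
def blocks : Finset (Finset (Finset (ZMod M × β))) :=
  (powersetCard (Fintype.card β * R) univ).image (block R)

lemma mem_blocks {b : Finset (Finset (ZMod M × β))} :
    b ∈ blocks M β R ↔ ∃ A, #A = Fintype.card β * R ∧ block R A = b := by
  simp [blocks]

lemma card_of_mem_of_mem_blocks {b : Finset (Finset (ZMod M × β))} (hb : b ∈ blocks M β R)
    {B : Finset (ZMod M × β)} (hB : B ∈ b) : #B = Fintype.card β * R := by
  obtain ⟨A, hA, rfl⟩ := mem_blocks.1 hb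
  rw [card_of_mem_block hB, hA]

lemma pairwiseDisjoint_blocks :
    (↑(blocks M β R) : Set (Finset (Finset (ZMod M × β)))).PairwiseDisjoint id := by
  intro b hb c hc hbc
  obtain ⟨A, -, rfl⟩ := mem_blocks.1 hb
  obtain ⟨A', -, rfl⟩ := mem_blocks.1 hc
  exact disjoint_left.2 fun B hB hB' => hbc (by rw [← block_eq_of_mem hB, block_eq_of_mem hB'])

lemma sum_card_blocks :
    ∑ b ∈ blocks M β R, #b = (M * Fintype.card β).choose (Fintype.card β * R) := by
  have : (blocks M β R).biUnion id = powersetCard (Fintype.card β * R) univ := by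
    ext B
    simp only [mem_biUnion, id, mem_powersetCard_univ]
    exact ⟨fun ⟨b, hb, hB⟩ => card_of_mem_of_mem_blocks hb hB,
      fun hB => ⟨block R B, mem_blocks.2 ⟨B, hB, rfl⟩, self_mem_block⟩⟩
  calc ∑ b ∈ blocks M β R, #b = #((blocks M β R).biUnion id) :=
        (card_biUnion pairwiseDisjoint_blocks).symm
    _ = _ := by rw [this, card_powersetCard, card_univ, Fintype.card_prod, ZMod.card]

/-- Unbalanced blocks are bounded by `M * card β`, which the balanced sets alone exceed. -/
lemma card_le_mul_card_filter_blocks (hcop : M.Coprime R) (hR : 1 ≤ R) (hRM : R ≤ M)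
    {b : Finset (Finset (ZMod M × β))} (hb : b ∈ blocks M β R) :
    #b ≤ M * #{b ∈ blocks M β R | #b = M} := by
  set U := {b ∈ blocks M β R | #b = M}
  have hbalanced : #{A : Finset (ZMod M × β) | IsBalanced R A} ≤ M * #U := by
    calc #{A : Finset (ZMod M × β) | IsBalanced R A} ≤ #(U.biUnion id) := by
          refine card_le_card fun A hA => mem_biUnion.2 ⟨block R A, ?_, self_mem_block⟩
          have hA := (mem_filter.1 hA).2
          refine mem_filter.2 ⟨mem_blocks.2 ⟨A, ?_, rfl⟩, card_block_of_isBalanced hcop hA⟩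
          rw [card_eq_sum_card_prodSlice, sum_congr rfl fun b _ => hA b, sum_const, card_univ,
            smul_eq_mul]
      _ ≤ ∑ b ∈ U, #b := card_biUnion_le
      _ = M * #U := by
          rw [sum_congr rfl fun b hb => (mem_filter.1 hb).2, sum_const, smul_eq_mul, mul_comm]
  obtain ⟨A, hA, rfl⟩ := mem_blocks.1 hb
  by_cases hbal : IsBalanced R A
  · rw [card_block_of_isBalanced hcop hbal]
    exact Nat.le_mul_of_pos_right _
      (card_pos.2 ⟨_, mem_filter.2 ⟨hb, card_block_of_isBalanced hcop hbal⟩⟩)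
  · have hRM' : R < Fintype.card (ZMod M) := by
      refine (ZMod.card M).symm ▸ lt_of_le_of_ne hRM fun hRM => hbal ?_
      rw [eq_univ_of_card A (by rw [hA, Fintype.card_prod, ZMod.card, hRM, mul_comm])]
      simpa [ZMod.card, hRM] using isBalanced_univ (α := ZMod M) (β := β)
    calc #(block R A) ≤ M * Fintype.card β := card_block_le
      _ ≤ #{A : Finset (ZMod M × β) | IsBalanced R A} := by
          simpa [ZMod.card] using mul_card_le_card_isBalanced (β := β) hR hRM'
      _ ≤ M * #U := hbalanced

theorem exists_isEquitableFamily_zmod_prod (hcop : M.Coprime R) (hR : 1 ≤ R) (hRM : R ≤ M)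
    {j : ℕ} (hj : j * M ≤ (M * Fintype.card β).choose (Fintype.card β * R)) :
    ∃ S : Finset (Finset (ZMod M × β)),
      IsEquitableFamily S (Fintype.card β * R) (j * M) (j * R) := by
  have hregular : ∀ b ∈ blocks M β R, ∀ x, #{B ∈ b | x ∈ B} * M = #b * R := by
    intro b hb x
    obtain ⟨A, hA, rfl⟩ := mem_blocks.1 hb
    exact card_filter_mem_block_mul hcop hA x
  have hdvd : ∀ b ∈ blocks M β R, M ∣ #b := fun b hb =>
    hcop.dvd_of_dvd_mul_right ⟨_, (hregular b hb 0).symm.trans (mul_comm _ _)⟩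
  obtain ⟨D, hDB, hDsum⟩ := exists_subset_sum_eq_of_dvd card (blocks M β R) (NeZero.pos M) hdvd
    (fun b hb => card_le_mul_card_filter_blocks hcop hR hRM hb) (dvd_mul_left M j)
    (by rwa [sum_card_blocks])
  have hD := pairwiseDisjoint_blocks.subset (coe_subset.2 hDB)
  have hcard : #(D.biUnion id) = j * M := by rw [card_biUnion hD, ← hDsum]; rfl
  refine ⟨D.biUnion id, fun B hB => ?_, hcard, fun x => ?_⟩
  · obtain ⟨b, hb, hBb⟩ := mem_biUnion.1 hB
    exact card_of_mem_of_mem_blocks (hDB hb) hBb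
  · have h := card_filter_mem_biUnion_mul hD (fun b hb => hregular b (hDB hb)) x
    rw [hcard] at h
    exact Nat.eq_of_mul_eq_mul_right (NeZero.pos M) (by rw [h]; ring)

end Blocks

/-- For every `j` with `0 ≤ j ≤ j* = r·C(m,r)/lcm(m,r)`, there exists a family `S` of
exactly `j·lcm(m,r)/r` many `r`-element subsets of `{0,…,m−1}` such that every element
of `{0,…,m−1}` belongs to exactly `j·lcm(m,r)/m` members of `S`. -/
theorem equitable_family_exists (m r j : ℕ) (hr1 : 1 ≤ r) (hrm : r ≤ m)
    (hj : j ≤ r * m.choose r / Nat.lcm m r) :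
    ∃ S : Finset (Finset (Fin m)),
      (∀ g ∈ S, g.card = r) ∧
      S.card = j * (Nat.lcm m r / r) ∧
      ∀ i : Fin m, (S.filter (fun g => i ∈ g)).card = j * (Nat.lcm m r / m) := by
  obtain ⟨M, R, hcop, hm, hr⟩ := Nat.exists_coprime m r
  generalize m.gcd r = g at hm hr
  subst hm hr
  have hRg : 0 < R * g := hr1
  have hR : 1 ≤ R := Nat.pos_of_mul_pos_right hRg
  have hg : 0 < g := Nat.pos_of_mul_pos_left hRg
  have hRM : R ≤ M := Nat.le_of_mul_le_mul_right hrm hg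
  have : NeZero M := ⟨by omega⟩
  have : NeZero g := ⟨hg.ne'⟩
  have hlcm : Nat.lcm (M * g) (R * g) = R * g * M := by
    rw [Nat.lcm_mul_right, hcop.lcm_eq_mul]; ring
  rw [hlcm, Nat.mul_div_mul_left _ _ hRg, Nat.le_div_iff_mul_le (NeZero.pos M)] at hj
  obtain ⟨S, hS⟩ := exists_isEquitableFamily_zmod_prod (β := ZMod g) (j := j) hcop hR hRM
    (by rwa [ZMod.card, mul_comm g])
  rw [hlcm, Nat.mul_div_cancel_left _ hRg, show R * g * M = R * (M * g) by ring,
    Nat.mul_div_cancel _ (Nat.mul_pos (NeZero.pos M) hg)]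
  rw [ZMod.card, mul_comm g] at hS
  exact ⟨_, hS.map (Fintype.equivOfCardEq (by simp [ZMod.card])).symm⟩
end

section
/- Let C be a monomial code achieving, for given dimension, the minimal possible common projection dimension, constructed by the removal procedure that stops at stage l = l̂ with degree threshold d̂. Then the minimum distance of C is at most 2^{m−z}, where z = l̂ + m − t if fewer than binomial(t, l̂) of the degree-(l̂+m−t) monomials with l̂ variables in {x_0,...,x_{t−1}} were removed, and z = l̂ − 1 + m − t otherwise. -/
/-- The number of variables of the monomial `g` among `{x_0,…,x_{t−1}}`. -/
def cntVars (m t : ℕ) (g : Finset (Fin m)) : ℕ :=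
  (g.filter (fun i : Fin m => (i : ℕ) < t)).card

lemma evalMon_ne_zero (m : ℕ) (g : Finset (Fin m)) : evalMon m g ≠ 0 := by
  intro h
  have := congrFun h (fun _ => 1)
  simp [evalMon] at this

def evalMonSupportEquiv (m : ℕ) (g : Finset (Fin m)) :
    {x : Fin m → ZMod 2 // ∀ i ∈ g, x i = 1} ≃ ({i : Fin m // i ∉ g} → ZMod 2) where
  toFun x i := x.1 i.1
  invFun y := ⟨fun i => if h : i ∈ g then 1 else y ⟨i, h⟩, fun i hi => by simp [hi]⟩
  left_inv x := by
    ext i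
    by_cases h : i ∈ g <;> simp [h]
    exact (x.2 i h).symm
  right_inv y := by
    ext i
    simp [i.2]

lemma hammingNorm_evalMon (m : ℕ) (g : Finset (Fin m)) :
    hammingNorm (evalMon m g) = 2 ^ (m - g.card) := by
  classical
  have key : ∀ x : Fin m → ZMod 2, evalMon m g x ≠ 0 ↔ ∀ i ∈ g, x i = 1 := by
    intro x
    unfold evalMon
    constructor
    · intro h i hi
      by_contra hne
      have h0 : x i = 0 := by
        have : ∀ a : ZMod 2, a ≠ 1 → a = 0 := by decide
        exact this _ hne
      exact h (Finset.prod_eq_zero hi h0)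
    · intro h
      rw [Finset.prod_eq_one h]
      exact one_ne_zero
  have : hammingNorm (evalMon m g)
      = Fintype.card {x : Fin m → ZMod 2 // ∀ i ∈ g, x i = 1} := by
    rw [Fintype.card_subtype]
    unfold hammingNorm
    congr 1
    ext x
    simp [key x]
  rw [this, Fintype.card_congr (evalMonSupportEquiv m g)]
  rw [Fintype.card_fun]
  congr 1
  rw [Fintype.card_subtype_compl, Fintype.card_coe, Fintype.card_fin]

/-- Minimum-distance bound for a partially symmetric code achieving the combinatorial
lower bound. `M` is obtained from all monomials by removing every monomial with more
than `l̂` variables among `{x_0,…,x_{t−1}}` and, at stage `l̂`, a set `R` of monomials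
with exactly `l̂` such variables, removed in decreasing order of total degree. Let
`z = l̂ + m − t` if fewer than `C(t,l̂)` of the degree-`(l̂+m−t)` monomials with `l̂`
variables in `{x_0,…,x_{t−1}}` were removed, and `z = l̂ − 1 + m − t` otherwise. Then
the minimum distance of the code is at most `2^{m−z}`: there is a nonzero codeword of
Hamming weight at most `2^{m−z}`. -/
theorem partially_symmetric_min_distance_bound (m t lhat : ℕ)
    (h1 : 1 ≤ lhat) (h2 : lhat ≤ t) (h3 : t ≤ m)
    (R M : Finset (Finset (Fin m)))
    (hR : ∀ g ∈ R, cntVars m t g = lhat)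
    (hRdown : ∀ g ∈ R, ∀ g' : Finset (Fin m),
        cntVars m t g' = lhat → g.card < g'.card → g' ∈ R)
    (hM : ∀ g : Finset (Fin m),
        g ∈ M ↔ (cntVars m t g < lhat ∨ (cntVars m t g = lhat ∧ g ∉ R))) :
    ∃ v ∈ monomialCode m (↑M : Set (Finset (Fin m))), v ≠ 0 ∧
      hammingNorm v ≤
        2 ^ (m - (if (R.filter (fun g => g.card = lhat + (m - t))).card < t.choose lhat
          then lhat + (m - t) else lhat - 1 + (m - t))) := by
  classical
  set T : Finset (Fin m) := Finset.univ.filter (fun i : Fin m => (i : ℕ) < t) with hT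
  have hTcard : T.card = t := by
    have : T = Finset.map (Fin.castLEEmb h3) Finset.univ := by
      ext i
      simp only [hT, Finset.mem_filter, Finset.mem_univ, true_and, Finset.mem_map,
        Fin.castLEEmb, Function.Embedding.coeFn_mk]
      constructor
      · intro hi
        exact ⟨⟨(i : ℕ), hi⟩, Fin.ext rfl⟩
      · rintro ⟨j, rfl⟩
        exact j.2
    rw [this, Finset.card_map, Finset.card_univ, Fintype.card_fin]
  have hTccard : Tᶜ.card = m - t := by
    rw [Finset.card_compl, hTcard, Fintype.card_fin]
  have hcnt : ∀ g : Finset (Fin m), cntVars m t g = (g ∩ T).card := by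
    intro g
    unfold cntVars
    congr 1
    ext i
    simp [hT]
  have hkey : ∀ A : Finset (Fin m), A ⊆ T → (A ∪ Tᶜ) ∩ T = A := by
    intro A hA
    ext i
    simp only [Finset.mem_inter, Finset.mem_union, Finset.mem_compl]
    constructor
    · rintro ⟨h | h, ht⟩
      · exact h
      · exact absurd ht h
    · intro h
      exact ⟨Or.inl h, hA h⟩
  -- building a monomial from A ⊆ T
  have hbuild : ∀ A : Finset (Fin m), A ⊆ T →
      cntVars m t (A ∪ Tᶜ) = A.card ∧ (A ∪ Tᶜ).card = A.card + (m - t) := by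
    intro A hA
    have hinter : (A ∪ Tᶜ) ∩ T = A := hkey A hA
    have hdisj : Disjoint A Tᶜ := disjoint_compl_right.mono_left hA
    refine ⟨by rw [hcnt, hinter], ?_⟩
    rw [Finset.card_union_of_disjoint hdisj, hTccard]
  -- find a monomial g ∈ M of the right cardinality
  obtain ⟨g, hgM, hgcard⟩ :
      ∃ g ∈ M, g.card = (if (R.filter (fun g => g.card = lhat + (m - t))).card < t.choose lhat
          then lhat + (m - t) else lhat - 1 + (m - t)) := by
    by_cases hif : (R.filter (fun g => g.card = lhat + (m - t))).card < t.choose lhat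
    · rw [if_pos hif]
      -- there is A ⊆ T, |A| = lhat, with A ∪ Tᶜ ∉ R
      have : ∃ A ∈ Finset.powersetCard lhat T, A ∪ Tᶜ ∉ R := by
        by_contra hcon
        push_neg at hcon
        have hinj : Set.InjOn (fun A => A ∪ Tᶜ) (Finset.powersetCard lhat T) := by
          intro A hA B hB hAB
          simp only [Finset.mem_coe, Finset.mem_powersetCard] at hA hB
          calc A = (A ∪ Tᶜ) ∩ T := (hkey A hA.1).symm
            _ = (B ∪ Tᶜ) ∩ T := by simp only at hAB; rw [hAB]
            _ = B := hkey B hB.1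
        have hmaps : ∀ A ∈ Finset.powersetCard lhat T,
            A ∪ Tᶜ ∈ R.filter (fun g => g.card = lhat + (m - t)) := by
          intro A hA
          rw [Finset.mem_powersetCard] at hA
          obtain ⟨hc, hcard⟩ := hbuild A hA.1
          rw [Finset.mem_filter]
          exact ⟨hcon A (Finset.mem_powersetCard.mpr hA), by rw [hcard, hA.2]⟩
        have := Finset.card_le_card_of_injOn _ hmaps hinj
        rw [Finset.card_powersetCard, hTcard] at this
        omega
      obtain ⟨A, hA, hAR⟩ := this
      rw [Finset.mem_powersetCard] at hA
      obtain ⟨hc, hcard⟩ := hbuild A hA.1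
      refine ⟨A ∪ Tᶜ, ?_, by rw [hcard, hA.2]⟩
      rw [hM]
      right
      exact ⟨by rw [hc, hA.2], hAR⟩
    · rw [if_neg hif]
      obtain ⟨A, hAsub, hAcard⟩ := Finset.exists_subset_card_eq
        (show lhat - 1 ≤ T.card by omega)
      obtain ⟨hc, hcard⟩ := hbuild A hAsub
      refine ⟨A ∪ Tᶜ, ?_, by rw [hcard, hAcard]⟩
      rw [hM]
      left
      rw [hc, hAcard]
      omega
  refine ⟨evalMon m g, Submodule.subset_span ⟨g, hgM, rfl⟩, evalMon_ne_zero m g, ?_⟩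
  rw [hammingNorm_evalMon, hgcard]
end
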